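/- arXiv:0806.1621 — 3 statements merged into one kernel-verified Lean document; each statement's English description precedes it below -/
import Mathlib

section
/- Let U, D1, D2 ∈ ℝ, h > 0, δt > 0, Δt > 0, set D0 = U − (h²/24)·D2, and define u(t, x) = D0 + D1·x + D2·(x²/2 + t). Then the tooth average Ū := (1/h) ∫_{−h/2}^{h/2} u(δt, x) dx equals U + D2·δt, and consequently the patch-dynamics extrapolation U + Δt·(Ū − U)/δt equals U + Δt·D2. -/
/-! The mean of `x ^ 2 / 2` over a tooth of width `h` is `h ^ 2 / 24`, which is exactly the
correction built into `D0`, and the linear term averages to zero; so the tooth average of the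
evolved quadratic is `U` plus the time term `D2 * δt`, and the extrapolated slope is `D2`. -/

lemma integral_quadratic_neg_to_self (a c₀ c₁ c₂ : ℝ) :
    ∫ x in -a..a, (c₀ + c₁ * x + c₂ * x ^ 2) = 2 * a * c₀ + 2 * a ^ 3 / 3 * c₂ := by
  have hint {f : ℝ → ℝ} (hf : Continuous f) : IntervalIntegrable f MeasureTheory.volume (-a) a :=
    hf.intervalIntegrable _ _
  rw [intervalIntegral.integral_add (hint (by fun_prop)) (hint (by fun_prop)),
    intervalIntegral.integral_add (hint (by fun_prop)) (hint (by fun_prop))]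
  simp only [intervalIntegral.integral_const, intervalIntegral.integral_const_mul c₁ fun x => x,
    intervalIntegral.integral_const_mul, integral_id, integral_pow, smul_eq_mul]
  ring

lemma average_quadratic_centered {h : ℝ} (hh : h ≠ 0) (c₀ c₁ c₂ : ℝ) :
    (1 / h) * ∫ x in -(h / 2)..h / 2, (c₀ + c₁ * x + c₂ * x ^ 2) = c₀ + h ^ 2 / 12 * c₂ := by
  rw [integral_quadratic_neg_to_self]
  field_simp
  ring

theorem patch_dynamics_heat_step_general
    (U D1 D2 h δt Δt : ℝ) (hh : 0 < h) (hδt : 0 < δt)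
    (D0 : ℝ) (hD0 : D0 = U - (h ^ 2 / 24) * D2)
    (u : ℝ → ℝ → ℝ) (hu : ∀ t x : ℝ, u t x = D0 + D1 * x + D2 * (x ^ 2 / 2 + t))
    (Ubar : ℝ) (hUbar : Ubar = (1 / h) * ∫ x in (-(h / 2))..(h / 2), u δt x) :
    Ubar = U + D2 * δt ∧ U + Δt * ((Ubar - U) / δt) = U + Δt * D2 := by
  have hu_δt : u δt = fun x => (D0 + D2 * δt) + D1 * x + D2 / 2 * x ^ 2 := by
    funext x
    rw [hu]
    ring
  have hmean : Ubar = U + D2 * δt := by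
    rw [hUbar, hu_δt, average_quadratic_centered hh.ne', hD0]
    ring
  refine ⟨hmean, ?_⟩
  rw [hmean, add_sub_cancel_left, mul_div_cancel_right₀ _ hδt.ne']

/-- For the heat equation, the tooth average of the evolved lifted quadratic at time `δt`
is `U + D2·δt`, so the patch-dynamics extrapolation over a macro step `Δt` gives
`U + Δt·D2`. -/
theorem patch_dynamics_heat_step
    (U D1 D2 h δt Δt : ℝ) (hh : 0 < h) (hδt : 0 < δt) (hΔt : 0 < Δt)
    (D0 : ℝ) (hD0 : D0 = U - (h ^ 2 / 24) * D2)
    (u : ℝ → ℝ → ℝ) (hu : ∀ t x : ℝ, u t x = D0 + D1 * x + D2 * (x ^ 2 / 2 + t))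
    (Ubar : ℝ) (hUbar : Ubar = (1 / h) * ∫ x in (-(h / 2))..(h / 2), u δt x) :
    Ubar = U + D2 * δt ∧ U + Δt * ((Ubar - U) / δt) = U + Δt * D2 :=
  patch_dynamics_heat_step_general U D1 D2 h δt Δt hh hδt D0 hD0 u hu Ubar hUbar
end

section
/- Let U, D1, D2 ∈ ℝ, h > 0, δt > 0, Δt > 0, set D0 = U − (h²/24)·D2, and define ũ_0(x) = D0 + D1·x + (D2/2)·x². Then the tooth average Ū := (1/h) ∫_{−h/2}^{h/2} ũ_0(x − δt) dx equals U − D1·δt + (D2/2)·δt², and consequently the patch-dynamics extrapolation U + Δt·(Ū − U)/δt equals U + Δt·(−D1 + (δt/2)·D2). -/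
/-!
Translating the tooth by `δt` turns the average of `ũ₀(· − δt)` into the average of the quadratic
over the interval centred at `-δt`, which is `D0 - D1 δt + (D2/2)(δt² + h²/12)`. The correction
`-(h²/24) D2` built into `D0` cancels the `h²/12` term exactly, leaving `U - D1 δt + (D2/2) δt²`;
dividing the increment by `δt` gives the extrapolation.
-/

namespace PatchDynamics

theorem integral_quadratic (p q r a b : ℝ) :
    ∫ x in a..b, (p + q * x + r * x ^ 2) =
      p * (b - a) + q * ((b ^ 2 - a ^ 2) / 2) + r * ((b ^ 3 - a ^ 3) / 3) := by
  have hlin : IntervalIntegrable (fun x : ℝ => p + q * x) MeasureTheory.volume a b :=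
    intervalIntegrable_const.add (intervalIntegral.intervalIntegrable_id.const_mul q)
  rw [intervalIntegral.integral_add hlin ((intervalIntegral.intervalIntegrable_pow 2).const_mul r),
    intervalIntegral.integral_add intervalIntegrable_const
      (intervalIntegral.intervalIntegrable_id.const_mul q),
    intervalIntegral.integral_const, intervalIntegral.integral_const_mul,
    intervalIntegral.integral_const_mul, integral_id, integral_pow]
  simp only [smul_eq_mul]
  ring

/-- The `h² / 12` is the variance of the uniform distribution on an interval of width `h`. -/
theorem average_quadratic_centered (p q r m h : ℝ) (hh : h ≠ 0) :
    (1 / h) * ∫ x in (m - h / 2)..(m + h / 2), (p + q * x + r * x ^ 2) =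
      p + q * m + r * (m ^ 2 + h ^ 2 / 12) := by
  rw [integral_quadratic]
  field_simp
  ring

theorem extrapolation_eq (U Ubar δt Δt s : ℝ) (hδt : δt ≠ 0) (hUbar : Ubar = U + δt * s) :
    U + Δt * ((Ubar - U) / δt) = U + Δt * s := by
  rw [hUbar, add_sub_cancel_left, mul_div_cancel_left₀ s hδt]

end PatchDynamics

open PatchDynamics in
theorem patch_dynamics_advection_step_general
    (U D1 D2 h δt Δt : ℝ) (hh : 0 < h) (hδt : 0 < δt)
    (D0 : ℝ) (hD0 : D0 = U - (h ^ 2 / 24) * D2)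
    (u0 : ℝ → ℝ) (hu0 : ∀ x : ℝ, u0 x = D0 + D1 * x + (D2 / 2) * x ^ 2)
    (Ubar : ℝ) (hUbar : Ubar = (1 / h) * ∫ x in (-(h / 2))..(h / 2), u0 (x - δt)) :
    Ubar = U - D1 * δt + (D2 / 2) * δt ^ 2 ∧
    U + Δt * ((Ubar - U) / δt) = U + Δt * (-D1 + (δt / 2) * D2) := by
  have hshift : (∫ x in (-(h / 2))..(h / 2), u0 (x - δt)) =
      ∫ x in (-δt - h / 2)..(-δt + h / 2), (D0 + D1 * x + (D2 / 2) * x ^ 2) := by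
    rw [intervalIntegral.integral_comp_sub_right u0 δt, funext hu0]
    congr 1 <;> ring
  have hmean : Ubar = U - D1 * δt + (D2 / 2) * δt ^ 2 := by
    rw [hUbar, hshift, average_quadratic_centered _ _ _ _ _ hh.ne', hD0]
    ring
  refine ⟨hmean, extrapolation_eq _ _ _ _ _ hδt.ne' ?_⟩
  rw [hmean]
  ring

/-- For the advection equation, the tooth average of the translated lifted quadratic
`ũ₀(· − δt)` equals `U − D1·δt + (D2/2)·δt²`, so the patch-dynamics extrapolation over a
macro step `Δt` gives `U + Δt·(−D1 + (δt/2)·D2)`. -/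
theorem patch_dynamics_advection_step
    (U D1 D2 h δt Δt : ℝ) (hh : 0 < h) (hδt : 0 < δt) (hΔt : 0 < Δt)
    (D0 : ℝ) (hD0 : D0 = U - (h ^ 2 / 24) * D2)
    (u0 : ℝ → ℝ) (hu0 : ∀ x : ℝ, u0 x = D0 + D1 * x + (D2 / 2) * x ^ 2)
    (Ubar : ℝ) (hUbar : Ubar = (1 / h) * ∫ x in (-(h / 2))..(h / 2), u0 (x - δt)) :
    Ubar = U - D1 * δt + (D2 / 2) * δt ^ 2 ∧
    U + Δt * ((Ubar - U) / δt) = U + Δt * (-D1 + (δt / 2) * D2) :=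
  patch_dynamics_advection_step_general U D1 D2 h δt Δt hh hδt D0 hD0 u0 hu0 Ubar hUbar
end

section
/- Let U, D1, D2 ∈ ℝ, h > 0, δt > 0, Δt > 0, set D0 = U − (h²/24)·D2, and define p(x) = D0 + D1·x + (D2/2)·x². Then the fourth derivative of p is identically zero, so u(t, x) := p(x) satisfies ∂_t u = −∂⁴_x u for all (t, x); moreover the tooth average Ū := (1/h) ∫_{−h/2}^{h/2} u(δt, x) dx equals U, and hence the patch-dynamics extrapolation U + Δt·(Ū − U)/δt equals U. -/
/-! The lifted initial profile is a quadratic, and `∂ₓ⁴` kills quadratics, so the micro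
evolution is stationary. The correction `−(h²/24)·D2` in `D0` is exactly what makes the
tooth average of the quadratic equal `U`, since `(1/h) ∫_{-h/2}^{h/2} x² dx = h²/12`.
The restricted value therefore never moves and the extrapolated time derivative vanishes. -/

open intervalIntegral

lemma deriv_quadratic (a b c : ℝ) :
    deriv (fun x : ℝ => a + b * x + c * x ^ 2) = fun x => b + 2 * c * x := by
  funext x
  have h := ((hasDerivAt_id x).const_mul b).const_add a |>.add ((hasDerivAt_pow 2 x).const_mul c)
  exact h.deriv.trans (by simp; ring)

lemma deriv_affine (a b : ℝ) : deriv (fun x : ℝ => a + b * x) = fun _ => b := by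
  funext x
  simp

lemma iteratedDeriv_quadratic_eq_zero (a b c : ℝ) {n : ℕ} (hn : 3 ≤ n) :
    iteratedDeriv n (fun x : ℝ => a + b * x + c * x ^ 2) = 0 := by
  obtain ⟨k, rfl⟩ := Nat.exists_eq_add_of_le' hn
  simp only [iteratedDeriv_succ', deriv_quadratic, deriv_affine, deriv_const']
  funext x
  simp

lemma integral_quadratic_symm (a b c r : ℝ) :
    ∫ x in (-r)..r, a + b * x + c * x ^ 2 = 2 * a * r + 2 * c * r ^ 3 / 3 := by
  have hcont : ∀ f : ℝ → ℝ, Continuous f → IntervalIntegrable f MeasureTheory.volume (-r) r :=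
    fun f hf => hf.intervalIntegrable _ _
  rw [integral_add (hcont _ (by fun_prop)) (hcont _ (by fun_prop)),
    integral_add (hcont _ (by fun_prop)) (hcont _ (by fun_prop)),
    integral_const, integral_const_mul, integral_const_mul, integral_id, integral_pow]
  simp only [smul_eq_mul]
  ring

lemma toothAverage_quadraticLifting (U D1 D2 : ℝ) {h : ℝ} (hh : h ≠ 0) :
    (1 / h) * ∫ x in (-(h / 2))..(h / 2), (U - h ^ 2 / 24 * D2) + D1 * x + D2 / 2 * x ^ 2
      = U := by
  rw [integral_quadratic_symm]
  field_simp
  ring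

theorem patch_dynamics_fourth_order_inconsistency_general
    (U D1 D2 h δt Δt : ℝ) (hh : 0 < h)
    (D0 : ℝ) (hD0 : D0 = U - (h ^ 2 / 24) * D2)
    (p : ℝ → ℝ) (hp : ∀ x : ℝ, p x = D0 + D1 * x + (D2 / 2) * x ^ 2)
    (Ubar : ℝ) (hUbar : Ubar = (1 / h) * ∫ x in (-(h / 2))..(h / 2), p x) :
    (∀ x : ℝ, iteratedDeriv 4 p x = 0) ∧
    (∀ t x : ℝ, deriv (fun _ : ℝ => p x) t = -iteratedDeriv 4 p x) ∧
    Ubar = U ∧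
    U + Δt * ((Ubar - U) / δt) = U := by
  obtain rfl : p = fun x => D0 + D1 * x + (D2 / 2) * x ^ 2 := funext hp
  have hflat : ∀ x : ℝ, iteratedDeriv 4 (fun x => D0 + D1 * x + (D2 / 2) * x ^ 2) x = 0 :=
    fun x => congrFun (iteratedDeriv_quadratic_eq_zero D0 D1 (D2 / 2) (by norm_num)) x
  have hmean : Ubar = U := by
    rw [hUbar, hD0]
    exact toothAverage_quadraticLifting U D1 D2 hh.ne'
  refine ⟨hflat, fun t x => ?_, hmean, ?_⟩
  · rw [hflat x, deriv_const, neg_zero]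
  · rw [hmean, sub_self, zero_div, mul_zero, add_zero]

/-- For the fourth-order equation `∂ₜ u = −∂ₓ⁴ u`, the quadratic lifted data
`p(x) = D0 + D1·x + (D2/2)·x²` has vanishing fourth derivative, so `u(t,x) := p(x)`
is an exact solution; its tooth average is `U`, and hence the patch-dynamics
extrapolation leaves `U` unchanged — patch dynamics solves `∂ₜ U = 0`. -/
theorem patch_dynamics_fourth_order_inconsistency
    (U D1 D2 h δt Δt : ℝ) (hh : 0 < h) (hδt : 0 < δt) (hΔt : 0 < Δt)
    (D0 : ℝ) (hD0 : D0 = U - (h ^ 2 / 24) * D2)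
    (p : ℝ → ℝ) (hp : ∀ x : ℝ, p x = D0 + D1 * x + (D2 / 2) * x ^ 2)
    (Ubar : ℝ) (hUbar : Ubar = (1 / h) * ∫ x in (-(h / 2))..(h / 2), p x) :
    (∀ x : ℝ, iteratedDeriv 4 p x = 0) ∧
    (∀ t x : ℝ, deriv (fun _ : ℝ => p x) t = -iteratedDeriv 4 p x) ∧
    Ubar = U ∧
    U + Δt * ((Ubar - U) / δt) = U :=
  patch_dynamics_fourth_order_inconsistency_general U D1 D2 h δt Δt hh D0 hD0 p hp Ubar hUbar
end
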